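/- Fix an integer d ≥ 3 and x ∈ (0,1). For every z with 0 < z < 1/2 and zx < (1−x)/2, one has g_d(x,z) ≤ g_d(x, z₀(x)); that is, for fixed x the function z ↦ g_d(x,z) attains its maximum on this range at z = z₀(x). -/

import Mathlib

/-!
For fixed `x`, the `z`-derivative of `g_d(x, z)` is
`d x (log((1 - 2z)((1 - x)/2 - zx)) - log(x z²))`, whose sign is that of
`(1 - 2z)((1 - x)/2 - zx) - x z² = x z² - z + (1 - x)/2`.
This quadratic has `z₀(x)` as its smaller root and factors as `(z₀ - z)(1 - x(z + z₀))`,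
where the second factor is positive on the domain. So `g_d(x, ·)` increases up to `z₀(x)` and
decreases after it.
-/

/-- The function $g_d(x,z)$ from the paper. -/
noncomputable def gFun (d : ℕ) (x z : ℝ) : ℝ :=
  ((d : ℝ)/2 - 1 - d * z) * x * Real.log x
    + ((d : ℝ) - 1) * (1 - x) * Real.log ((1 - x)/2)
    - 2 * d * x * z * Real.log z
    - (1 - 2*z) * d * x / 2 * Real.log (1 - 2*z)
    - d * ((1 - x)/2 - z * x) * Real.log ((1 - x)/2 - z * x)

/-- The maximizer $z_0(x) = \frac{1-\sqrt{1-2(1-x)x}}{2x}$. -/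
noncomputable def z0 (x : ℝ) : ℝ := (1 - Real.sqrt (1 - 2 * (1 - x) * x)) / (2 * x)

/-- The function $h_d(x) = g_d(x, z_0(x))$. -/
noncomputable def hFun (d : ℕ) (x : ℝ) : ℝ := gFun d x (z0 x)

open Set

theorem le_of_hasDerivAt_nonneg_of_nonpos {f f' : ℝ → ℝ} {D : Set ℝ} [D.OrdConnected]
    {a b : ℝ} (ha : a ∈ D) (hb : b ∈ D) (hf : ∀ w ∈ D, HasDerivAt f (f' w) w)
    (hleft : ∀ w ∈ D, w < a → 0 ≤ f' w) (hright : ∀ w ∈ D, a < w → f' w ≤ 0) :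
    f b ≤ f a := by
  rcases le_total b a with hba | hab
  · have hsub : Icc b a ⊆ D := OrdConnected.out ‹_› hb ha
    refine monotoneOn_of_hasDerivWithinAt_nonneg (convex_Icc b a) (f' := f')
      (fun w hw => (hf w (hsub hw)).continuousAt.continuousWithinAt) ?_ ?_
      (left_mem_Icc.2 hba) (right_mem_Icc.2 hba) hba <;> rw [interior_Icc]
    · exact fun w hw => (hf w (hsub (Ioo_subset_Icc_self hw))).hasDerivWithinAt
    · exact fun w hw => hleft w (hsub (Ioo_subset_Icc_self hw)) hw.2
  · have hsub : Icc a b ⊆ D := OrdConnected.out ‹_› ha hb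
    refine antitoneOn_of_hasDerivWithinAt_nonpos (convex_Icc a b) (f' := f')
      (fun w hw => (hf w (hsub hw)).continuousAt.continuousWithinAt) ?_ ?_
      (left_mem_Icc.2 hab) (right_mem_Icc.2 hab) hab <;> rw [interior_Icc]
    · exact fun w hw => (hf w (hsub (Ioo_subset_Icc_self hw))).hasDerivWithinAt
    · exact fun w hw => hright w (hsub (Ioo_subset_Icc_self hw)) hw.1

/-- The range of `z` on which all logarithms in `gFun d x z` have positive arguments. -/
def gDomain (x : ℝ) : Set ℝ := {z | 0 < z ∧ z < 1/2 ∧ z * x < (1 - x)/2}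

theorem ordConnected_gDomain {x : ℝ} (hx : 0 ≤ x) : (gDomain x).OrdConnected :=
  ⟨fun _ ha _ hb _ hw => ⟨ha.1.trans_le hw.1, hw.2.trans_lt hb.2.1,
    (mul_le_mul_of_nonneg_right hw.2 hx).trans_lt hb.2.2⟩⟩

theorem hasDerivAt_gFun (d : ℕ) {x w : ℝ} (hx : 0 < x) (hw : w ∈ gDomain x) :
    HasDerivAt (gFun d x)
      (d * x * (Real.log ((1 - 2*w) * ((1 - x)/2 - w*x)) - Real.log (x * w^2))) w := by
  obtain ⟨hw0, hw1, hwx⟩ := hw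
  have h2w : 0 < 1 - 2*w := by linarith
  have hv : 0 < (1 - x)/2 - w*x := by linarith
  have hzlogz := Real.hasDerivAt_mul_log hw0.ne'
  have h2wlog := (Real.hasDerivAt_mul_log h2w.ne').comp w
    (((hasDerivAt_id' w).const_mul 2).const_sub 1)
  have hvlog := (Real.hasDerivAt_mul_log hv.ne').comp w
    (((hasDerivAt_id' w).mul_const x).const_sub ((1 - x)/2))
  have H := (((((hasDerivAt_id' w).const_mul (d * x * Real.log x)).const_sub
    (((d : ℝ)/2 - 1) * x * Real.log x + ((d : ℝ) - 1) * (1 - x) * Real.log ((1 - x)/2))).sub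
    (hzlogz.const_mul (2 * d * x))).sub (h2wlog.const_mul (d * x / 2))).sub (hvlog.const_mul (d : ℝ))
  refine (H.congr_of_eventuallyEq (Filter.Eventually.of_forall fun z => ?_)).congr_deriv ?_
  · simp only [gFun, Function.comp_apply, Pi.sub_apply]
    ring
  · rw [Real.log_mul h2w.ne' hv.ne', Real.log_mul hx.ne' (by positivity), Real.log_pow]
    push_cast
    ring

theorem z0_quadratic {x : ℝ} (hx : x ≠ 0) : x * z0 x ^ 2 - z0 x + (1 - x)/2 = 0 := by
  have hs : Real.sqrt (1 - 2 * (1 - x) * x) ^ 2 = 1 - 2 * (1 - x) * x :=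
    Real.sq_sqrt (by nlinarith [sq_nonneg x, sq_nonneg (1 - x)])
  rw [z0]
  generalize Real.sqrt (1 - 2 * (1 - x) * x) = s at hs ⊢
  field_simp
  linear_combination hs

theorem z0_mem_gDomain {x : ℝ} (hx : x ∈ Ioo (0 : ℝ) 1) : z0 x ∈ gDomain x := by
  obtain ⟨hx0, hx1⟩ := hx
  set s := Real.sqrt (1 - 2 * (1 - x) * x) with hs_def
  have hs : s ^ 2 = (1 - x) ^ 2 + x ^ 2 := by
    rw [Real.sq_sqrt (by nlinarith)]; ring
  have hs0 : 0 ≤ s := Real.sqrt_nonneg _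
  have hs1 : s < 1 := by nlinarith
  have hxs : x < s := by nlinarith
  have h1xs : 1 - x < s := by nlinarith
  have hz0x : z0 x * x = (1 - s) / 2 := by
    rw [z0, ← hs_def]; field_simp
  refine ⟨div_pos (by linarith) (by linarith), ?_, by rw [hz0x]; linarith⟩
  rw [z0, ← hs_def, div_lt_iff₀ (by linarith)]
  linarith

theorem sub_mul_sq_eq_z0_sub_mul {x : ℝ} (hx : x ≠ 0) (w : ℝ) :
    (1 - 2*w) * ((1 - x)/2 - w*x) - x * w^2 = (z0 x - w) * (1 - x * (w + z0 x)) := by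
  linear_combination z0_quadratic hx

theorem one_sub_mul_add_pos {x w w' : ℝ} (hx : 0 ≤ x) (hw : w ∈ gDomain x)
    (hw' : w' ∈ gDomain x) : 0 < 1 - x * (w + w') := by
  have := hw.2.2
  have := hw'.2.2
  nlinarith

theorem x_mul_sq_le_of_le_z0 {x w : ℝ} (hx : x ∈ Ioo (0 : ℝ) 1) (hw : w ∈ gDomain x)
    (h : w ≤ z0 x) : x * w ^ 2 ≤ (1 - 2*w) * ((1 - x)/2 - w*x) := by
  have := one_sub_mul_add_pos hx.1.le hw (z0_mem_gDomain hx)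
  nlinarith [sub_mul_sq_eq_z0_sub_mul hx.1.ne' w, mul_nonneg (sub_nonneg.2 h) this.le]

theorem le_x_mul_sq_of_z0_le {x w : ℝ} (hx : x ∈ Ioo (0 : ℝ) 1) (hw : w ∈ gDomain x)
    (h : z0 x ≤ w) : (1 - 2*w) * ((1 - x)/2 - w*x) ≤ x * w ^ 2 := by
  have := one_sub_mul_add_pos hx.1.le hw (z0_mem_gDomain hx)
  nlinarith [sub_mul_sq_eq_z0_sub_mul hx.1.ne' w, mul_nonneg (sub_nonneg.2 h) this.le]

theorem gFun_le_gFun_z0_general (d : ℕ) (x : ℝ) (hx : x ∈ Set.Ioo (0 : ℝ) 1)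
    (z : ℝ) (hz0 : 0 < z) (hz1 : z < 1/2) (hzx : z * x < (1 - x)/2) :
    gFun d x z ≤ gFun d x (z0 x) := by
  have := ordConnected_gDomain hx.1.le
  have hdx : 0 ≤ (d : ℝ) * x := by have := hx.1; positivity
  refine le_of_hasDerivAt_nonneg_of_nonpos (z0_mem_gDomain hx) ⟨hz0, hz1, hzx⟩
    (fun w hw => hasDerivAt_gFun d hx.1 hw) (fun w hw hlt => ?_) (fun w hw hgt => ?_)
  · have hxw : 0 < x * w ^ 2 := by have := hw.1; have := hx.1; positivity
    exact mul_nonneg hdx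
      (sub_nonneg.2 (Real.log_le_log hxw (x_mul_sq_le_of_le_z0 hx hw hlt.le)))
  · have hprod : 0 < (1 - 2*w) * ((1 - x)/2 - w*x) :=
      mul_pos (by linarith [hw.2.1]) (by linarith [hw.2.2])
    exact mul_nonpos_of_nonneg_of_nonpos hdx
      (sub_nonpos.2 (Real.log_le_log hprod (le_x_mul_sq_of_z0_le hx hw hgt.le)))

/-- Fix an integer $d \ge 3$ and $x \in (0,1)$.  For every $z$ with
$0 < z < 1/2$ and $zx < (1-x)/2$ one has $g_d(x,z) \le g_d(x, z_0(x))$. -/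
theorem gFun_le_gFun_z0 (d : ℕ) (hd : 3 ≤ d) (x : ℝ) (hx : x ∈ Set.Ioo (0 : ℝ) 1)
    (z : ℝ) (hz0 : 0 < z) (hz1 : z < 1/2) (hzx : z * x < (1 - x)/2) :
    gFun d x z ≤ gFun d x (z0 x) :=
  gFun_le_gFun_z0_general d x hx z hz0 hz1 hzx
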